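/- arXiv:1803.11319 — 8 statements merged into one kernel-verified Lean document; each statement's English description precedes it below -/
import Mathlib

section
/- Let X be a Banach space and A : X → X* a bounded symmetric linear operator. If A is Fredholm of index zero and X₀ is a closed complement of Ker A in X, then the range of A equals the annihilator of Ker A in X* (identified with X₀* under X* = X₀* ⊕ (Ker A)*). -/
/-!
Symmetry of `A` gives `range A ⊆ (Ker A)^⊥`. By Hahn–Banach every functional on the
finite-dimensional `Ker A` extends to `X`, so `X* / (Ker A)^⊥ ≃ (Ker A)*` has dimension
`dim Ker A`, which by index zero is `dim X* / range A`. Two nested subspaces of equal finite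
codimension coincide.
-/

open Module

theorem Submodule.eq_of_le_of_finrank_quotient_eq {K V : Type*} [Field K] [AddCommGroup V]
    [Module K V] {p q : Submodule K V} [FiniteDimensional K (V ⧸ p)] (hle : p ≤ q)
    (h : finrank K (V ⧸ p) = finrank K (V ⧸ q)) : p = q := by
  refine le_antisymm hle ?_
  have hsum := (q.map p.mkQ).finrank_quotient_add_finrank
  rw [(p.quotientQuotientEquivQuotient q hle).finrank_eq, ← h, add_eq_left,
    Submodule.finrank_eq_zero, eq_bot_iff, map_le_iff_le_comap, comap_bot, ker_mkQ] at hsum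
  exact hsum

namespace Submodule

variable {𝕜 E : Type*} [RCLike 𝕜] [NormedAddCommGroup E] [NormedSpace 𝕜 E]

def strongDualAnnihilator (K : Submodule 𝕜 E) : Submodule 𝕜 (StrongDual 𝕜 E) :=
  K.dualAnnihilator.comap (ContinuousLinearMap.coeLM 𝕜)

@[simp]
theorem mem_strongDualAnnihilator {K : Submodule 𝕜 E} {α : StrongDual 𝕜 E} :
    α ∈ K.strongDualAnnihilator ↔ ∀ ξ ∈ K, α ξ = 0 :=
  mem_dualAnnihilator _

theorem dualRestrict_comp_coeLM_surjective (K : Submodule 𝕜 E) [FiniteDimensional 𝕜 K] :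
    Function.Surjective (K.dualRestrict ∘ₗ ContinuousLinearMap.coeLM 𝕜) := by
  intro f
  obtain ⟨g, hg, -⟩ := exists_extension_norm_eq K (LinearMap.toContinuousLinearMap f)
  exact ⟨g, LinearMap.ext hg⟩

theorem finrank_quotient_strongDualAnnihilator (K : Submodule 𝕜 E) [FiniteDimensional 𝕜 K] :
    finrank 𝕜 (StrongDual 𝕜 E ⧸ K.strongDualAnnihilator) = finrank 𝕜 K := by
  have hker : LinearMap.ker (K.dualRestrict ∘ₗ ContinuousLinearMap.coeLM 𝕜) =
      K.strongDualAnnihilator := by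
    rw [LinearMap.ker_comp, dualRestrict_ker_eq_dualAnnihilator, strongDualAnnihilator]
  rw [← hker, ((K.dualRestrict ∘ₗ ContinuousLinearMap.coeLM 𝕜).quotKerEquivOfSurjective
    K.dualRestrict_comp_coeLM_surjective).finrank_eq, Subspace.dual_finrank_eq]

end Submodule

theorem ContinuousLinearMap.range_le_strongDualAnnihilator_ker {𝕜 E : Type*} [RCLike 𝕜]
    [NormedAddCommGroup E] [NormedSpace 𝕜 E] {A : E →L[𝕜] StrongDual 𝕜 E}
    (hA : ∀ x y : E, A x y = A y x) :
    LinearMap.range (A : E →ₗ[𝕜] StrongDual 𝕜 E) ≤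
      (LinearMap.ker (A : E →ₗ[𝕜] StrongDual 𝕜 E)).strongDualAnnihilator := by
  rintro _ ⟨x, rfl⟩
  rw [Submodule.mem_strongDualAnnihilator]
  intro ξ (hξ : A ξ = 0)
  change A x ξ = 0
  rw [hA, hξ]
  rfl

theorem range_symmetric_fredholm_eq_annihilator_general {𝕜 X : Type*} [RCLike 𝕜]
    [NormedAddCommGroup X] [NormedSpace 𝕜 X]
    (A : X →L[𝕜] StrongDual 𝕜 X)
    (hA : ∀ x y : X, A x y = A y x)
    (hker : FiniteDimensional 𝕜 (LinearMap.ker (A : X →ₗ[𝕜] StrongDual 𝕜 X)))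
    (hcoker : FiniteDimensional 𝕜 (StrongDual 𝕜 X ⧸
        (LinearMap.range (A : X →ₗ[𝕜] StrongDual 𝕜 X) : Submodule 𝕜 (StrongDual 𝕜 X))))
    (hindex : Module.finrank 𝕜 (LinearMap.ker (A : X →ₗ[𝕜] StrongDual 𝕜 X))
      = Module.finrank 𝕜 (StrongDual 𝕜 X ⧸
          (LinearMap.range (A : X →ₗ[𝕜] StrongDual 𝕜 X) : Submodule 𝕜 (StrongDual 𝕜 X)))) :
    ((LinearMap.range (A : X →ₗ[𝕜] StrongDual 𝕜 X) : Submodule 𝕜 (StrongDual 𝕜 X)) : Set (StrongDual 𝕜 X))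
      = {α : StrongDual 𝕜 X | ∀ ξ ∈ LinearMap.ker (A : X →ₗ[𝕜] StrongDual 𝕜 X), α ξ = 0} := by
  have hrange : LinearMap.range (A : X →ₗ[𝕜] StrongDual 𝕜 X) =
      (LinearMap.ker (A : X →ₗ[𝕜] StrongDual 𝕜 X)).strongDualAnnihilator :=
    Submodule.eq_of_le_of_finrank_quotient_eq (A.range_le_strongDualAnnihilator_ker hA)
      (by rw [← hindex, Submodule.finrank_quotient_strongDualAnnihilator])
  rw [hrange]
  ext α
  exact Submodule.mem_strongDualAnnihilator

/-- If `A : X →L X*` is a bounded symmetric operator on a Banach space that is Fredholm with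
index zero (finite-dimensional kernel, closed range, finite-dimensional cokernel of the same
dimension as the kernel), and `X₀` is a closed complement of `Ker A` in `X`, then the range of
`A` equals the annihilator of `Ker A` in `X*` (which is identified with `X₀*` under the
decomposition `X* = X₀* ⊕ (Ker A)*`). -/
theorem range_symmetric_fredholm_eq_annihilator {𝕜 X : Type*} [RCLike 𝕜]
    [NormedAddCommGroup X] [NormedSpace 𝕜 X] [CompleteSpace X]
    (A : X →L[𝕜] StrongDual 𝕜 X)
    (hA : ∀ x y : X, A x y = A y x)
    (hker : FiniteDimensional 𝕜 (LinearMap.ker (A : X →ₗ[𝕜] StrongDual 𝕜 X)))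
    (hclosed : IsClosed ((LinearMap.range (A : X →ₗ[𝕜] StrongDual 𝕜 X) : Submodule 𝕜 (StrongDual 𝕜 X)) :
        Set (StrongDual 𝕜 X)))
    (hcoker : FiniteDimensional 𝕜 (StrongDual 𝕜 X ⧸
        (LinearMap.range (A : X →ₗ[𝕜] StrongDual 𝕜 X) : Submodule 𝕜 (StrongDual 𝕜 X))))
    (hindex : Module.finrank 𝕜 (LinearMap.ker (A : X →ₗ[𝕜] StrongDual 𝕜 X))
      = Module.finrank 𝕜 (StrongDual 𝕜 X ⧸
          (LinearMap.range (A : X →ₗ[𝕜] StrongDual 𝕜 X) : Submodule 𝕜 (StrongDual 𝕜 X))))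
    (X₀ : Submodule 𝕜 X) (hX₀ : IsClosed (X₀ : Set X))
    (hcompl : IsCompl X₀ (LinearMap.ker (A : X →ₗ[𝕜] StrongDual 𝕜 X))) :
    ((LinearMap.range (A : X →ₗ[𝕜] StrongDual 𝕜 X) : Submodule 𝕜 (StrongDual 𝕜 X)) : Set (StrongDual 𝕜 X))
      = {α : StrongDual 𝕜 X | ∀ ξ ∈ LinearMap.ker (A : X →ₗ[𝕜] StrongDual 𝕜 X), α ξ = 0} :=
  range_symmetric_fredholm_eq_annihilator_general A hA hker hcoker hindex
end

section
/- Let g : K^d → K be the monomial function g(y) = y₁^{n₁} y₂^{n₂} ⋯ y_d^{n_d}, with non-negative integer exponents n_i and total degree N = n₁ + ⋯ + n_d ≥ 2 (so g(0) = 0 and g'(0) = 0). Then there is a constant C > 0 such that ‖g'(y)‖ ≥ C |g(y)|^{1 − 1/N} for all y ∈ K^d; in particular g satisfies a Łojasiewicz gradient inequality on all of K^d with exponent θ = 1 − 1/N ∈ [1/2, 1). -/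
/-- Łojasiewicz exponent of a monomial function: for `g(y) = y₁^{n₁} ⋯ y_d^{n_d}` with total
degree `N = n₁ + ⋯ + n_d ≥ 2`, there is a constant `C > 0` such that
`‖g'(y)‖ ≥ C |g(y)|^{1 - 1/N}` for all `y ∈ 𝕜^d`; moreover the exponent
`θ = 1 - 1/N` lies in `[1/2, 1)`. -/
theorem lojasiewicz_monomial {𝕜 : Type*} [RCLike 𝕜] (d : ℕ) (n : Fin d → ℕ)
    (hN : 2 ≤ ∑ i, n i) :
    ((1 : ℝ) / 2 ≤ 1 - 1 / (∑ i, n i : ℝ) ∧ (1 : ℝ) - 1 / (∑ i, n i : ℝ) < 1)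
    ∧ ∃ C : ℝ, 0 < C ∧ ∀ y : Fin d → 𝕜,
        C * ‖∏ i, y i ^ n i‖ ^ ((1 : ℝ) - 1 / (∑ i, n i : ℝ))
          ≤ ‖fderiv 𝕜 (fun z : Fin d → 𝕜 => ∏ i, z i ^ n i) y‖ := by
  classical
  have hN2 : (2 : ℝ) ≤ (∑ i, (n i : ℝ)) := by exact_mod_cast hN
  have hNpos : (0 : ℝ) < (∑ i, (n i : ℝ)) := by linarith
  have hinv : (0 : ℝ) < 1 / (∑ i, (n i : ℝ)) := by positivity
  have hinv2 : (1 : ℝ) / (∑ i, (n i : ℝ)) ≤ 1 / 2 :=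
    one_div_le_one_div_of_le (by norm_num) hN2
  refine ⟨⟨by linarith, by linarith⟩, 1, one_pos, fun y => ?_⟩
  set θ : ℝ := (1 : ℝ) - 1 / (∑ i, n i : ℝ) with hθ
  have hθpos : 0 < θ := by rw [hθ]; linarith
  -- compute the derivative
  have hder : HasFDerivAt (fun z : Fin d → 𝕜 => ∏ i, z i ^ n i)
      (∑ i, (∏ j ∈ Finset.univ.erase i, y j ^ n j) •
        (((n i : 𝕜) * y i ^ (n i - 1)) •
          (ContinuousLinearMap.proj i : (Fin d → 𝕜) →L[𝕜] 𝕜))) y :=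
    HasFDerivAt.finset_prod fun i _ =>
      (hasDerivAt_pow (n i) (y i)).comp_hasFDerivAt y
        ((ContinuousLinearMap.proj i : (Fin d → 𝕜) →L[𝕜] 𝕜).hasFDerivAt)
  rw [hder.fderiv]
  set D := ∑ i, (∏ j ∈ Finset.univ.erase i, y j ^ n j) •
      (((n i : 𝕜) * y i ^ (n i - 1)) • (ContinuousLinearMap.proj i : (Fin d → 𝕜) →L[𝕜] 𝕜)) with hD
  set G : ℝ := ‖∏ i, y i ^ n i‖ with hG
  have hGprod : G = ∏ i, ‖y i‖ ^ n i := by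
    rw [hG, norm_prod]; exact Finset.prod_congr rfl fun i _ => norm_pow _ _
  have hGnn : 0 ≤ G := norm_nonneg _
  -- pick an index with nonzero exponent minimizing ‖y i‖
  obtain ⟨i, hiS, hmin⟩ := Finset.exists_min_image
      (Finset.univ.filter fun i => 1 ≤ n i) (fun i => ‖y i‖)
      (by
        by_contra h
        rw [Finset.not_nonempty_iff_eq_empty] at h
        have : ∑ i, n i = 0 := Finset.sum_eq_zero fun i _ => by
          by_contra hni
          have : i ∈ Finset.univ.filter fun i => 1 ≤ n i := by
            simp [Nat.one_le_iff_ne_zero, hni]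
          simp [h] at this
        omega)
  have hni : 1 ≤ n i := (Finset.mem_filter.mp hiS).2
  -- evaluate D at the basis vector e_i
  have hDe : D (Pi.single i 1) =
      (∏ j ∈ Finset.univ.erase i, y j ^ n j) * ((n i : 𝕜) * y i ^ (n i - 1)) := by
    rw [hD]
    simp only [ContinuousLinearMap.sum_apply, ContinuousLinearMap.smul_apply,
      ContinuousLinearMap.proj_apply, smul_eq_mul]
    rw [Finset.sum_eq_single i]
    · simp
    · intro j _ hj
      simp [Pi.single_eq_of_ne hj]
    · simp
  have hDeD : ‖D (Pi.single i 1)‖ ≤ ‖D‖ := by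
    have := D.le_opNorm (Pi.single i 1)
    rwa [Pi.norm_single, norm_one, mul_one] at this
  by_cases hyi : y i = 0
  · -- gradient side is ≥ 0 and the left side is 0
    have hG0 : G = 0 := by
      rw [hGprod]
      exact Finset.prod_eq_zero (Finset.mem_univ i)
        (by rw [hyi, norm_zero, zero_pow (by omega)])
    rw [hG0, Real.zero_rpow (ne_of_gt hθpos), mul_zero]
    exact norm_nonneg _
  · have hyipos : 0 < ‖y i‖ := norm_pos_iff.mpr hyi
    -- G ≥ ‖y i‖ ^ N
    have hyG : ‖y i‖ ^ (∑ j, n j) ≤ G := by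
      rw [hGprod, ← Finset.prod_pow_eq_pow_sum]
      refine Finset.prod_le_prod (fun j _ => by positivity) fun j _ => ?_
      rcases Nat.eq_zero_or_pos (n j) with h0 | h1
      · simp [h0]
      · exact pow_le_pow_left₀ hyipos.le
          (hmin j (Finset.mem_filter.mpr ⟨Finset.mem_univ j, h1⟩)) _
    have hGpos : 0 < G := lt_of_lt_of_le (by positivity) hyG
    -- ‖y i‖ ≤ G ^ (1/N)
    have hyle : ‖y i‖ ≤ G ^ ((1 : ℝ) / (∑ j, (n j : ℝ))) := by
      have h1 : ‖y i‖ = (‖y i‖ ^ (∑ j, n j)) ^ ((1 : ℝ) / (∑ j, (n j : ℝ))) := by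
        rw [← Real.rpow_natCast (‖y i‖) (∑ j, n j), ← Real.rpow_mul hyipos.le,
          mul_one_div]
        push_cast
        rw [div_self (ne_of_gt hNpos), Real.rpow_one]
      rw [h1]
      exact Real.rpow_le_rpow (by positivity) hyG (le_of_lt hinv)
    -- key norm computation : ‖D e_i‖ * ‖y i‖ = n i * G
    have hkey : ‖D (Pi.single i 1)‖ * ‖y i‖ = (n i : ℝ) * G := by
      rw [hDe, norm_mul, norm_mul, norm_pow, RCLike.norm_natCast, norm_prod]
      have hsplit : G = ‖y i‖ ^ n i * ∏ j ∈ Finset.univ.erase i, ‖y j ^ n j‖ := by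
        rw [hG, norm_prod, ← Finset.prod_erase_mul _ _ (Finset.mem_univ i), mul_comm,
          norm_pow]
      rw [hsplit]
      have hpw : ‖y i‖ ^ (n i - 1) * ‖y i‖ = ‖y i‖ ^ n i := by
        rw [← pow_succ]
        congr 1
        omega
      rw [← hpw]
      ring
    -- conclude
    have hGθ : G ^ θ * ‖y i‖ ≤ G := by
      calc G ^ θ * ‖y i‖ ≤ G ^ θ * G ^ ((1 : ℝ) / (∑ j, (n j : ℝ))) := by
            exact mul_le_mul_of_nonneg_left hyle (Real.rpow_nonneg hGnn θ)
        _ = G := by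
            rw [← Real.rpow_add hGpos, hθ]
            norm_num
    have h1 : G ^ θ * ‖y i‖ ≤ ‖D‖ * ‖y i‖ := by
      calc G ^ θ * ‖y i‖ ≤ G := hGθ
        _ ≤ (n i : ℝ) * G := le_mul_of_one_le_left hGnn (by exact_mod_cast hni)
        _ = ‖D (Pi.single i 1)‖ * ‖y i‖ := hkey.symm
        _ ≤ ‖D‖ * ‖y i‖ := mul_le_mul_of_nonneg_right hDeD hyipos.le
    have := le_of_mul_le_mul_right h1 hyipos
    rw [one_mul]
    exact this
end

section
/- Let V ⊂ K^e and U ⊂ K^d be open neighborhoods of the origins and φ : V → U an open C¹ map with φ(0) = 0. Let f : U → K be a C¹ function. If the pullback f ∘ φ satisfies a Łojasiewicz gradient inequality with exponent θ ≥ 0 and constant C > 0 on V, then, after possibly shrinking U, the function f satisfies a Łojasiewicz gradient inequality with the same exponent θ and a possibly smaller constant on U. -/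
/-!
The chain rule gives `‖D(f ∘ φ)(y)‖ ≤ ‖Df(φ y)‖ · ‖Dφ(y)‖`, and `‖Dφ‖` is bounded by some `M`
on a neighbourhood `W` of `0` because `φ` is `C¹`. Hence `f` satisfies the inequality with
constant `C / M` at every point of `φ '' W`, which is an open neighbourhood of `0` since `φ`
is open.
-/

open Set Filter Topology

section

variable {𝕜 : Type*} [NontriviallyNormedField 𝕜]
  {E : Type*} [NormedAddCommGroup E] [NormedSpace 𝕜 E]
  {F : Type*} [NormedAddCommGroup F] [NormedSpace 𝕜 F]
  {G : Type*} [NormedAddCommGroup G] [NormedSpace 𝕜 G]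

theorem norm_fderiv_comp_le {f : F → G} {φ : E → F} {y : E}
    (hf : DifferentiableAt 𝕜 f (φ y)) (hφ : DifferentiableAt 𝕜 φ y) :
    ‖fderiv 𝕜 (f ∘ φ) y‖ ≤ ‖fderiv 𝕜 f (φ y)‖ * ‖fderiv 𝕜 φ y‖ := by
  rw [fderiv_comp y hf hφ]
  exact ContinuousLinearMap.opNorm_comp_le _ _

theorem ContDiffOn.exists_isOpen_norm_fderiv_lt {φ : E → F} {V : Set E} {x : E}
    (hφ : ContDiffOn 𝕜 1 φ V) (hV : IsOpen V) (hx : x ∈ V) :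
    ∃ W ⊆ V, IsOpen W ∧ x ∈ W ∧ ∃ M : ℝ, 0 < M ∧ ∀ y ∈ W, ‖fderiv 𝕜 φ y‖ < M := by
  have hcont : ContinuousAt (fun y ↦ ‖fderiv 𝕜 φ y‖) x :=
    ((hφ.continuousOn_fderiv_of_isOpen hV le_rfl).continuousAt (hV.mem_nhds hx)).norm
  have hlt : ∀ᶠ y in 𝓝 x, ‖fderiv 𝕜 φ y‖ < ‖fderiv 𝕜 φ x‖ + 1 :=
    hcont.eventually_lt continuousAt_const (lt_add_one _)
  obtain ⟨W, hWsub, hWopen, hxW⟩ := mem_nhds_iff.mp (inter_mem (hV.mem_nhds hx) hlt)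
  exact ⟨W, fun y hy ↦ (hWsub hy).1, hWopen, hxW, _, by positivity, fun y hy ↦ (hWsub hy).2⟩

end

theorem lojasiewicz_exponent_pushforward_general {𝕜 : Type*} [RCLike 𝕜] (d e : ℕ)
    (V : Set (Fin e → 𝕜)) (U : Set (Fin d → 𝕜))
    (hV : IsOpen V) (h0V : (0 : Fin e → 𝕜) ∈ V)
    (φ : (Fin e → 𝕜) → (Fin d → 𝕜))
    (hφ : ContDiffOn 𝕜 1 φ V)
    (hφopen : ∀ W ⊆ V, IsOpen W → IsOpen (φ '' W))
    (hφmaps : Set.MapsTo φ V U) (hφ0 : φ 0 = 0)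
    (f : (Fin d → 𝕜) → 𝕜) (hf : ContDiffOn 𝕜 1 f U)
    (θ C : ℝ) (hC : 0 < C)
    (hloj : ∀ y ∈ V, C * ‖f (φ y)‖ ^ θ ≤ ‖fderiv 𝕜 (f ∘ φ) y‖) :
    ∃ U' ⊆ U, IsOpen U' ∧ (0 : Fin d → 𝕜) ∈ U' ∧
      ∃ C' : ℝ, 0 < C' ∧ ∀ x ∈ U', C' * ‖f x‖ ^ θ ≤ ‖fderiv 𝕜 f x‖ := by
  obtain ⟨W, hWV, hWopen, h0W, M, hM, hφM⟩ := hφ.exists_isOpen_norm_fderiv_lt hV h0V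
  have hφWU : φ '' W ⊆ U := (hφmaps.mono_left hWV).image_subset
  have hφWopen : IsOpen (φ '' W) := hφopen W hWV hWopen
  refine ⟨φ '' W, hφWU, hφWopen, ⟨0, h0W, hφ0⟩, C / M, div_pos hC hM, ?_⟩
  rintro _ ⟨y, hyW, rfl⟩
  have hdφ : DifferentiableAt 𝕜 φ y :=
    (hφ.differentiableOn one_ne_zero).differentiableAt (hV.mem_nhds (hWV hyW))
  have hdf : DifferentiableAt 𝕜 f (φ y) :=
    (hf.differentiableOn one_ne_zero).differentiableAt
      (mem_of_superset (hφWopen.mem_nhds (mem_image_of_mem φ hyW)) hφWU)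
  rw [div_mul_eq_mul_div, div_le_iff₀ hM]
  calc C * ‖f (φ y)‖ ^ θ ≤ ‖fderiv 𝕜 (f ∘ φ) y‖ := hloj y (hWV hyW)
    _ ≤ ‖fderiv 𝕜 f (φ y)‖ * ‖fderiv 𝕜 φ y‖ := norm_fderiv_comp_le hdf hdφ
    _ ≤ ‖fderiv 𝕜 f (φ y)‖ * M := by gcongr; exact (hφM y hyW).le

/-- Łojasiewicz exponents and maps: if `φ : V → U` is an open `C¹` map between neighborhoods
of the origins in `𝕜^e` and `𝕜^d` with `φ(0) = 0`, `f : U → 𝕜` is `C¹`, and the pullback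
`f ∘ φ` obeys a Łojasiewicz gradient inequality with exponent `θ ≥ 0` and constant `C > 0` on
`V`, then after possibly shrinking `U` the function `f` obeys the Łojasiewicz gradient
inequality with the same exponent `θ` and a possibly smaller constant. -/
theorem lojasiewicz_exponent_pushforward {𝕜 : Type*} [RCLike 𝕜] (d e : ℕ)
    (V : Set (Fin e → 𝕜)) (U : Set (Fin d → 𝕜))
    (hV : IsOpen V) (hU : IsOpen U) (h0V : (0 : Fin e → 𝕜) ∈ V) (h0U : (0 : Fin d → 𝕜) ∈ U)
    (φ : (Fin e → 𝕜) → (Fin d → 𝕜))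
    (hφ : ContDiffOn 𝕜 1 φ V)
    (hφopen : ∀ W ⊆ V, IsOpen W → IsOpen (φ '' W))
    (hφmaps : Set.MapsTo φ V U) (hφ0 : φ 0 = 0)
    (f : (Fin d → 𝕜) → 𝕜) (hf : ContDiffOn 𝕜 1 f U)
    (θ C : ℝ) (hθ : 0 ≤ θ) (hC : 0 < C)
    (hloj : ∀ y ∈ V, C * ‖f (φ y)‖ ^ θ ≤ ‖fderiv 𝕜 (f ∘ φ) y‖) :
    ∃ U' ⊆ U, IsOpen U' ∧ (0 : Fin d → 𝕜) ∈ U' ∧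
      ∃ C' : ℝ, 0 < C' ∧ ∀ x ∈ U', C' * ‖f x‖ ^ θ ≤ ‖fderiv 𝕜 f x‖ :=
  lojasiewicz_exponent_pushforward_general d e V U hV h0V φ hφ hφopen hφmaps hφ0 f hf θ C hC hloj
end

section
/- Let X and X̃ be Banach spaces with a continuous embedding X̃ ⊂ X*. Let Q : X → K be the quadratic function Q(x) = ½⟨x, A x⟩ defined by a bounded symmetric operator A : X → X̃ whose kernel is complemented in X and whose range is all of X̃. Then there is a constant C > 0 such that ‖Q'(x)‖_{X̃} ≥ C |Q(x)|^{1/2} for all x ∈ X, i.e. Q satisfies the Łojasiewicz gradient inequality globally with exponent one half. -/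
/-!
By the open mapping theorem every `A x` has a preimage `a` with `‖a‖ ≤ C ‖A x‖`. Since
`x - a ∈ ker A`, symmetry gives `⟨x, A x⟩ = ⟨a, A x⟩`, hence `|Q(x)| ≲ ‖A x‖ ‖a‖ ≲ ‖A x‖²`,
and taking square roots yields the inequality.
-/

open Function

section QuadraticForm

variable {𝕜 X X' : Type*} [RCLike 𝕜]
  [NormedAddCommGroup X] [NormedSpace 𝕜 X] [NormedAddCommGroup X'] [NormedSpace 𝕜 X']
  {j : X' →L[𝕜] StrongDual 𝕜 X} {A : X →L[𝕜] X'}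

theorem apply_self_eq_of_map_eq (hA : ∀ x y : X, j (A x) y = j (A y) x) {x a : X}
    (h : A a = A x) : j (A x) x = j (A x) a := by
  have hker : j (A x) (x - a) = 0 := by rw [hA, map_sub, h, sub_self, map_zero]; rfl
  rwa [map_sub, sub_eq_zero] at hker

theorem exists_norm_apply_self_le_mul_sq [CompleteSpace X] [CompleteSpace X']
    (hA : ∀ x y : X, j (A x) y = j (A y) x) (hsurj : Surjective A) :
    ∃ K > 0, ∀ x : X, ‖j (A x) x‖ ≤ K * ‖A x‖ ^ 2 := by
  obtain ⟨C, hC, hpre⟩ := A.exists_preimage_norm_le hsurj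
  refine ⟨(‖j‖ + 1) * C, by positivity, fun x => ?_⟩
  obtain ⟨a, ha, ha_le⟩ := hpre (A x)
  calc ‖j (A x) x‖ = ‖j (A x) a‖ := by rw [apply_self_eq_of_map_eq hA ha]
    _ ≤ ‖j‖ * ‖A x‖ * ‖a‖ := (j (A x)).le_of_opNorm_le (j.le_opNorm _) a
    _ ≤ (‖j‖ + 1) * ‖A x‖ * (C * ‖A x‖) := by gcongr; linarith
    _ = (‖j‖ + 1) * C * ‖A x‖ ^ 2 := by ring

end QuadraticForm

theorem Real.inv_sqrt_mul_rpow_half_le {s t K : ℝ} (hK : 0 < K) (ht : 0 ≤ t)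
    (h : s ≤ K * t ^ 2) : (√K)⁻¹ * s ^ (1 / 2 : ℝ) ≤ t := by
  rw [← Real.sqrt_eq_rpow, inv_mul_le_iff₀ (by positivity)]
  calc √s ≤ √(K * t ^ 2) := Real.sqrt_le_sqrt h
    _ = √K * t := by rw [Real.sqrt_mul hK.le, Real.sqrt_sq ht]

theorem quadratic_form_lojasiewicz_half_general {𝕜 X X' : Type*} [RCLike 𝕜]
    [NormedAddCommGroup X] [NormedSpace 𝕜 X] [CompleteSpace X]
    [NormedAddCommGroup X'] [NormedSpace 𝕜 X'] [CompleteSpace X']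
    (j : X' →L[𝕜] StrongDual 𝕜 X)
    (A : X →L[𝕜] X')
    (hA : ∀ x y : X, j (A x) y = j (A y) x)
    (hrange : LinearMap.range (A : X →ₗ[𝕜] X') = (⊤ : Submodule 𝕜 X')) :
    ∃ C : ℝ, 0 < C ∧ ∀ x : X,
      C * ‖(2 : 𝕜)⁻¹ * j (A x) x‖ ^ ((1 : ℝ) / 2) ≤ ‖A x‖ := by
  obtain ⟨K, hK, hbound⟩ :=
    exists_norm_apply_self_le_mul_sq hA (LinearMap.range_eq_top.mp hrange)
  refine ⟨(√(K / 2))⁻¹, by positivity, fun x => ?_⟩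
  refine Real.inv_sqrt_mul_rpow_half_le (by positivity) (norm_nonneg _) ?_
  calc ‖(2 : 𝕜)⁻¹ * j (A x) x‖ = ‖j (A x) x‖ / 2 := by
        rw [norm_mul, norm_inv, RCLike.norm_two, inv_mul_eq_div]
    _ ≤ K / 2 * ‖A x‖ ^ 2 := by linarith [hbound x]

/-- Łojasiewicz gradient inequality with exponent one half for quadratic forms: if
`Q(x) = ½⟨x, A x⟩` is defined by a bounded symmetric operator `A : X → X̃ ⊂ X*` whose kernel
is complemented in `X` and whose range is all of `X̃`, then there is `C > 0` with
`‖Q'(x)‖_{X̃} = ‖A x‖_{X̃} ≥ C |Q(x)|^{1/2}` for all `x ∈ X`. -/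
theorem quadratic_form_lojasiewicz_half {𝕜 X X' : Type*} [RCLike 𝕜]
    [NormedAddCommGroup X] [NormedSpace 𝕜 X] [CompleteSpace X]
    [NormedAddCommGroup X'] [NormedSpace 𝕜 X'] [CompleteSpace X']
    (j : X' →L[𝕜] StrongDual 𝕜 X) (hj : Function.Injective j)
    (A : X →L[𝕜] X')
    (hA : ∀ x y : X, j (A x) y = j (A y) x)
    (X₀ : Submodule 𝕜 X) (hX₀ : IsClosed (X₀ : Set X))
    (hcompl : IsCompl X₀ (LinearMap.ker (A : X →ₗ[𝕜] X')))
    (hrange : LinearMap.range (A : X →ₗ[𝕜] X') = (⊤ : Submodule 𝕜 X')) :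
    ∃ C : ℝ, 0 < C ∧ ∀ x : X,
      C * ‖(2 : 𝕜)⁻¹ * j (A x) x‖ ^ ((1 : ℝ) / 2) ≤ ‖A x‖ :=
  quadratic_form_lojasiewicz_half_general j A hA hrange
end

section
/- Łojasiewicz exponent is invariant under direct sum with a nondegenerate quadratic form: Let f : U ⊂ X → K be C² with f(0) = 0, f'(0) = 0, and f'(x) ∈ X̃ for x ∈ U, and let Q(y) = ½⟨y, A y⟩ on a Banach space Y be given by a bounded symmetric operator A : Y → Ỹ with complemented kernel and range Ỹ. Define f_Q(x,y) = f(x) + Q(y). Then for θ ∈ [1/2, 1): f satisfies a Łojasiewicz gradient inequality with exponent θ on (a possibly shrunken) U if and only if f_Q satisfies one with exponent θ on U × V for some neighborhood V of 0 in Y, with norms taken in X̃ ⊕ Ỹ. -/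
/-!
Only the forward direction needs an argument; the converse is the case `y = 0`.
Where `‖A y‖ < c`, the global inequality `c |Q y|^{1/2} ≤ ‖A y‖` forces `|Q y| < 1`, so raising
the exponent from `1/2` to `θ` keeps it valid: `c |Q y|^θ ≤ ‖A y‖`. Since `t ↦ t^θ` is
subadditive for `θ ≤ 1`, this adds to the inequality for `f` with constant `min C c`.
-/

lemma Real.rpow_le_of_rpow_le_of_le_one {b s p q : ℝ} (hb : 0 ≤ b) (hp : 0 < p) (hpq : p ≤ q)
    (h : b ^ p ≤ s) (hs : s ≤ 1) : b ^ q ≤ s := by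
  have hb1 : b ≤ 1 := by
    by_contra! hb1
    linarith [Real.one_lt_rpow hb1 hp]
  exact (Real.rpow_le_rpow_of_exponent_ge' hb hb1 hp.le hpq).trans h

lemma Real.mul_rpow_le_of_mul_rpow_le_of_le {b c t p q : ℝ} (hc : 0 < c) (hb : 0 ≤ b)
    (hp : 0 < p) (hpq : p ≤ q) (h : c * b ^ p ≤ t) (ht : t ≤ c) : c * b ^ q ≤ t := by
  rw [← le_div_iff₀' hc] at h ⊢
  exact Real.rpow_le_of_rpow_le_of_le_one hb hp hpq h ((div_le_one hc).2 ht)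

lemma Real.min_mul_rpow_add_le_add {a b C c u v θ : ℝ} (ha : 0 ≤ a) (hb : 0 ≤ b)
    (hC : 0 < C) (hc : 0 < c) (hθ₀ : 0 ≤ θ) (hθ₁ : θ ≤ 1)
    (hau : C * a ^ θ ≤ u) (hbv : c * b ^ θ ≤ v) : min C c * (a + b) ^ θ ≤ u + v := by
  have hmin : 0 ≤ min C c := (lt_min hC hc).le
  calc min C c * (a + b) ^ θ ≤ min C c * a ^ θ + min C c * b ^ θ := by
        rw [← mul_add]
        exact mul_le_mul_of_nonneg_left (Real.rpow_add_le_add_rpow ha hb hθ₀ hθ₁) hmin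
    _ ≤ C * a ^ θ + c * b ^ θ := by
        gcongr
        · exact min_le_left C c
        · exact min_le_right C c
    _ ≤ u + v := add_le_add hau hbv

theorem lojasiewicz_invariance_quadratic_summand_general {𝕜 X X' Y Y' : Type*} [RCLike 𝕜]
    [NormedAddCommGroup X] [NormedSpace 𝕜 X]
    [NormedAddCommGroup X'] [NormedSpace 𝕜 X']
    [NormedAddCommGroup Y] [NormedSpace 𝕜 Y]
    [NormedAddCommGroup Y'] [NormedSpace 𝕜 Y']
    (jY : Y' →L[𝕜] StrongDual 𝕜 Y)
    (U : Set X)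
    (f : X → 𝕜)
    (Df : X → X')
    (A : Y →L[𝕜] Y')
    (c : ℝ) (hc : 0 < c)
    (hQ : ∀ y : Y, c * ‖(2 : 𝕜)⁻¹ * jY (A y) y‖ ^ ((1 : ℝ) / 2) ≤ ‖A y‖)
    (θ : ℝ) (hθ : 1 / 2 ≤ θ) (hθ' : θ < 1) :
    (∃ U' ⊆ U, IsOpen U' ∧ (0 : X) ∈ U' ∧ ∃ C : ℝ, 0 < C ∧
        ∀ x ∈ U', C * ‖f x‖ ^ θ ≤ ‖Df x‖)
    ↔ (∃ U' ⊆ U, IsOpen U' ∧ (0 : X) ∈ U' ∧ ∃ V : Set Y, IsOpen V ∧ (0 : Y) ∈ V ∧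
        ∃ C : ℝ, 0 < C ∧ ∀ x ∈ U', ∀ y ∈ V,
          C * ‖f x + (2 : 𝕜)⁻¹ * jY (A y) y‖ ^ θ ≤ ‖Df x‖ + ‖A y‖) := by
  have hθ₀ : 0 ≤ θ := le_trans (by norm_num) hθ
  constructor
  · rintro ⟨U', hU'U, hU', h0U', C, hC, hf⟩
    refine ⟨U', hU'U, hU', h0U', {y | ‖A y‖ < c}, isOpen_lt (by fun_prop) continuous_const,
      by simpa using hc, min C c, lt_min hC hc, fun x hx y hy => ?_⟩
    have hQθ : c * ‖(2 : 𝕜)⁻¹ * jY (A y) y‖ ^ θ ≤ ‖A y‖ :=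
      Real.mul_rpow_le_of_mul_rpow_le_of_le hc (norm_nonneg _) (by norm_num) hθ (hQ y) hy.le
    calc min C c * ‖f x + (2 : 𝕜)⁻¹ * jY (A y) y‖ ^ θ
        ≤ min C c * (‖f x‖ + ‖(2 : 𝕜)⁻¹ * jY (A y) y‖) ^ θ := by
          gcongr
          exact norm_add_le _ _
      _ ≤ ‖Df x‖ + ‖A y‖ :=
          Real.min_mul_rpow_add_le_add (norm_nonneg _) (norm_nonneg _) hC hc hθ₀ hθ'.le
            (hf x hx) hQθ
  · rintro ⟨U', hU'U, hU', h0U', V, -, h0V, C, hC, hfQ⟩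
    exact ⟨U', hU'U, hU', h0U', C, hC, fun x hx => by simpa using hfQ x hx 0 h0V⟩

/-- Invariance of the Łojasiewicz exponent under direct sum with a nondegenerate quadratic
form: let `f : U ⊂ X → 𝕜` be `C²` with `f(0) = 0`, `f'(0) = 0`, and derivative represented by
a gradient `Df` with values in `X̃ ⊂ X*`, and let `Q(y) = ½⟨y, A y⟩` on a Banach space `Y` be
defined by a bounded symmetric operator `A : Y → Ỹ ⊂ Y*` with complemented kernel, range `Ỹ`,
and obeying the quadratic Łojasiewicz inequality `‖A y‖ ≥ c |Q(y)|^{1/2}`.  Then for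
`θ ∈ [1/2, 1)`: `f` obeys a Łojasiewicz gradient inequality with exponent `θ` on a possibly
shrunken `U` if and only if `f_Q(x,y) = f(x) + Q(y)` obeys one with exponent `θ` on `U' × V`
for some neighborhood `V` of `0` in `Y`, with norms taken in `X̃ ⊕ Ỹ`. -/
theorem lojasiewicz_invariance_quadratic_summand {𝕜 X X' Y Y' : Type*} [RCLike 𝕜]
    [NormedAddCommGroup X] [NormedSpace 𝕜 X] [CompleteSpace X]
    [NormedAddCommGroup X'] [NormedSpace 𝕜 X'] [CompleteSpace X']
    [NormedAddCommGroup Y] [NormedSpace 𝕜 Y] [CompleteSpace Y]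
    [NormedAddCommGroup Y'] [NormedSpace 𝕜 Y'] [CompleteSpace Y']
    (jX : X' →L[𝕜] StrongDual 𝕜 X) (hjX : Function.Injective jX)
    (jY : Y' →L[𝕜] StrongDual 𝕜 Y) (hjY : Function.Injective jY)
    (U : Set X) (hU : IsOpen U) (h0U : (0 : X) ∈ U)
    (f : X → 𝕜) (hf : ContDiffOn 𝕜 2 f U) (hf0 : f 0 = 0)
    (Df : X → X') (hDf : ∀ x ∈ U, HasFDerivAt f (jX (Df x)) x)
    (hDf0 : Df 0 = 0) (hDfc : ContinuousOn Df U)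
    (A : Y →L[𝕜] Y')
    (hA : ∀ y z : Y, jY (A y) z = jY (A z) y)
    (Y₀ : Submodule 𝕜 Y) (hY₀ : IsClosed (Y₀ : Set Y))
    (hcompl : IsCompl Y₀ (LinearMap.ker (A : Y →ₗ[𝕜] Y')))
    (hrange : LinearMap.range (A : Y →ₗ[𝕜] Y') = (⊤ : Submodule 𝕜 Y'))
    (c : ℝ) (hc : 0 < c)
    (hQ : ∀ y : Y, c * ‖(2 : 𝕜)⁻¹ * jY (A y) y‖ ^ ((1 : ℝ) / 2) ≤ ‖A y‖)
    (θ : ℝ) (hθ : 1 / 2 ≤ θ) (hθ' : θ < 1) :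
    (∃ U' ⊆ U, IsOpen U' ∧ (0 : X) ∈ U' ∧ ∃ C : ℝ, 0 < C ∧
        ∀ x ∈ U', C * ‖f x‖ ^ θ ≤ ‖Df x‖)
    ↔ (∃ U' ⊆ U, IsOpen U' ∧ (0 : X) ∈ U' ∧ ∃ V : Set Y, IsOpen V ∧ (0 : Y) ∈ V ∧
        ∃ C : ℝ, 0 < C ∧ ∀ x ∈ U', ∀ y ∈ V,
          C * ‖f x + (2 : 𝕜)⁻¹ * jY (A y) y‖ ^ θ ≤ ‖Df x‖ + ‖A y‖) :=
  lojasiewicz_invariance_quadratic_summand_general jY U f Df A c hc hQ θ hθ hθ'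
end

section
/- Morse–Bott implies Łojasiewicz exponent one half (finite-dimensional version): Let U ⊂ ℝ^d be an open neighborhood of 0 and f : U → ℝ a C³ function with f(0) = 0, f'(0) = 0, such that after a C¹ change of coordinates Φ with Φ(0) = 0, f(Φ(y)) = ½⟨y, A y⟩ for a symmetric matrix A. Then there exist a neighborhood U' of 0 and C > 0 such that ‖∇f(x)‖ ≥ C |f(x)|^{1/2} for all x ∈ U'. -/
open scoped RealInnerProductSpace Topology

/-! In the coordinates `x = Φ y`, the chain rule applied to `f ∘ Φ = ½⟪y, A y⟫` gives
`f'(Φ y) ∘ Φ'(y) = ⟪A y, ·⟫`, hence `‖A y‖ ≤ M ‖∇f(Φ y)‖`. On the other hand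
`|⟪y, A y⟫| ≤ c ‖A y‖²`: only the component of `y` orthogonal to `ker A` contributes, and `A` is
bounded below on `(ker A)ᗮ` by finite-dimensionality. Together, `|f| ≤ (c/2) M² ‖∇f‖²` on `Φ '' V`.
-/

section

variable {E F : Type*} [NormedAddCommGroup E] [InnerProductSpace ℝ E]

theorem LinearMap.exists_norm_le_mul_norm_apply_of_mem_orthogonal_ker
    [FiniteDimensional ℝ E] [NormedAddCommGroup F] [NormedSpace ℝ F] (A : E →ₗ[ℝ] F) :
    ∃ c > (0 : ℝ), ∀ z ∈ (LinearMap.ker A)ᗮ, ‖z‖ ≤ c * ‖A z‖ := by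
  have hinj : LinearMap.ker (A ∘ₗ (LinearMap.ker A)ᗮ.subtype) = ⊥ := by
    rw [LinearMap.ker_eq_bot']
    intro z hz
    exact Subtype.ext <| inner_self_eq_zero.1 <|
      (Submodule.mem_orthogonal _ _).1 z.2 z hz
  obtain ⟨c, hc, hanti⟩ := (A ∘ₗ (LinearMap.ker A)ᗮ.subtype).exists_antilipschitzWith hinj
  refine ⟨c, hc, fun z hz => ?_⟩
  simpa using hanti.le_mul_dist ⟨z, hz⟩ 0

theorem LinearMap.IsSymmetric.exists_abs_inner_self_le_mul_norm_sq [FiniteDimensional ℝ E]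
    {A : E →ₗ[ℝ] E} (hA : A.IsSymmetric) :
    ∃ c > (0 : ℝ), ∀ y, |⟪y, A y⟫| ≤ c * ‖A y‖ ^ 2 := by
  obtain ⟨c, hc, hbound⟩ := A.exists_norm_le_mul_norm_apply_of_mem_orthogonal_ker
  refine ⟨c, hc, fun y => ?_⟩
  set K := LinearMap.ker A
  set q : E := Kᗮ.starProjection y
  have hp : K.starProjection y ∈ K := K.starProjection_apply_mem y
  have hy : K.starProjection y + q = y := K.starProjection_add_starProjection_orthogonal y
  have hAq : A q = A y := by rw [← hy, map_add, hp, zero_add]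
  calc |⟪y, A y⟫| = |⟪A y, q⟫| := by rw [hA, hAq]
    _ ≤ ‖A y‖ * ‖q‖ := abs_real_inner_le_norm (A y) q
    _ ≤ ‖A y‖ * (c * ‖A q‖) := by gcongr; exact hbound q (Kᗮ.starProjection_apply_mem y)
    _ = c * ‖A y‖ ^ 2 := by rw [hAq]; ring

theorem LinearMap.IsSymmetric.hasFDerivAt_half_inner_self {A : E →L[ℝ] E}
    (hA : (A : E →ₗ[ℝ] E).IsSymmetric) (y : E) :
    HasFDerivAt (fun z => (1 / 2 : ℝ) * ⟪z, A z⟫) (innerSL ℝ (A y)) y := by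
  refine (((hasFDerivAt_id y).inner ℝ A.hasFDerivAt).const_mul (1 / 2 : ℝ)).congr_fderiv ?_
  ext v
  have hcomm : ⟪v, A y⟫ = ⟪A y, v⟫ := real_inner_comm _ _
  simp only [_root_.smul_apply, ContinuousLinearMap.comp_apply,
    ContinuousLinearMap.prod_apply, ContinuousLinearMap.id_apply, id_eq, fderivInnerCLM_apply,
    hcomm, hA.apply_clm y v, smul_eq_mul, coe_innerSL_apply]
  ring

theorem fderiv_comp_eq_innerSL_of_eventuallyEq [NormedAddCommGroup F] [NormedSpace ℝ F]
    {f : F → ℝ} {Φ : E → F} {A : E →L[ℝ] E} {y : E} (hA : (A : E →ₗ[ℝ] E).IsSymmetric)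
    (hf : DifferentiableAt ℝ f (Φ y)) (hΦ : DifferentiableAt ℝ Φ y)
    (hquad : (fun z => (1 / 2 : ℝ) * ⟪z, A z⟫) =ᶠ[𝓝 y] f ∘ Φ) :
    (fderiv ℝ f (Φ y)).comp (fderiv ℝ Φ y) = innerSL ℝ (A y) :=
  (hf.hasFDerivAt.comp y hΦ.hasFDerivAt).unique
    ((hA.hasFDerivAt_half_inner_self y).congr_of_eventuallyEq hquad.symm)

theorem norm_le_opNorm_mul_of_comp_eq_innerSL [NormedAddCommGroup F] [NormedSpace ℝ F]
    {L : F →L[ℝ] ℝ} {T : E →L[ℝ] F} {v : E} (h : L.comp T = innerSL ℝ v) :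
    ‖v‖ ≤ ‖L‖ * ‖T‖ := by
  rw [← innerSL_apply_norm ℝ v, ← h]
  exact L.opNorm_comp_le T

theorem norm_gradient_eq_norm_fderiv [CompleteSpace E] (f : E → ℝ) (x : E) :
    ‖gradient f x‖ = ‖fderiv ℝ f x‖ :=
  (InnerProductSpace.toDual ℝ E).symm.norm_map _

theorem inv_sqrt_mul_abs_rpow_half_le {a B t : ℝ} (hB : 0 < B) (ht : 0 ≤ t)
    (h : |a| ≤ B * t ^ 2) : (√B)⁻¹ * |a| ^ (1 / 2 : ℝ) ≤ t := by
  rw [← Real.sqrt_eq_rpow, inv_mul_le_iff₀ (Real.sqrt_pos.2 hB)]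
  calc √|a| ≤ √(B * t ^ 2) := Real.sqrt_le_sqrt h
    _ = √B * t := by rw [Real.sqrt_mul hB.le, Real.sqrt_sq ht]

end

theorem morse_bott_lojasiewicz_half_findim_general (d : ℕ)
    (U : Set (EuclideanSpace ℝ (Fin d))) (hU : IsOpen U)
    (f : EuclideanSpace ℝ (Fin d) → ℝ)
    (hf : ContDiffOn ℝ 3 f U)
    (A : EuclideanSpace ℝ (Fin d) →L[ℝ] EuclideanSpace ℝ (Fin d))
    (hAsym : ∀ z w : EuclideanSpace ℝ (Fin d), ⟪A z, w⟫ = ⟪z, A w⟫)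
    (V : Set (EuclideanSpace ℝ (Fin d))) (hV : IsOpen V)
    (h0V : (0 : EuclideanSpace ℝ (Fin d)) ∈ V)
    (Φ : EuclideanSpace ℝ (Fin d) → EuclideanSpace ℝ (Fin d))
    (hΦ : ContDiffOn ℝ 1 Φ V) (hΦ0 : Φ 0 = 0)
    (hΦU : Φ '' V ⊆ U) (hΦopen : IsOpen (Φ '' V))
    (M : ℝ) (hM : ∀ y ∈ V, ‖fderiv ℝ Φ y‖ ≤ M)
    (hquad : ∀ y ∈ V, f (Φ y) = (1 / 2) * ⟪y, A y⟫) :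
    ∃ U' ⊆ U, IsOpen U' ∧ (0 : EuclideanSpace ℝ (Fin d)) ∈ U' ∧
      ∃ C : ℝ, 0 < C ∧ ∀ x ∈ U', C * |f x| ^ ((1 : ℝ) / 2) ≤ ‖gradient f x‖ := by
  have hA : (A : EuclideanSpace ℝ (Fin d) →ₗ[ℝ] EuclideanSpace ℝ (Fin d)).IsSymmetric := hAsym
  obtain ⟨c, hc, hcA⟩ := hA.exists_abs_inner_self_le_mul_norm_sq
  set M' := max M 1
  refine ⟨Φ '' V, hΦU, hΦopen, ⟨0, h0V, hΦ0⟩, (√(c / 2 * M' ^ 2))⁻¹, by positivity, ?_⟩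
  rintro _ ⟨y, hy, rfl⟩
  have hfd : DifferentiableAt ℝ f (Φ y) :=
    (hf.contDiffAt (hU.mem_nhds (hΦU ⟨y, hy, rfl⟩))).differentiableAt (by norm_num)
  have hΦd : DifferentiableAt ℝ Φ y :=
    (hΦ.contDiffAt (hV.mem_nhds hy)).differentiableAt one_ne_zero
  have hAy : ‖A y‖ ≤ ‖gradient f (Φ y)‖ * M' := by
    rw [norm_gradient_eq_norm_fderiv]
    calc ‖A y‖ ≤ ‖fderiv ℝ f (Φ y)‖ * ‖fderiv ℝ Φ y‖ :=
          norm_le_opNorm_mul_of_comp_eq_innerSL <| fderiv_comp_eq_innerSL_of_eventuallyEq hA hfd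
            hΦd <| Filter.eventuallyEq_of_mem (hV.mem_nhds hy) fun z hz => (hquad z hz).symm
      _ ≤ ‖fderiv ℝ f (Φ y)‖ * M' := by gcongr; exact (hM y hy).trans (le_max_left _ _)
  refine inv_sqrt_mul_abs_rpow_half_le (by positivity) (norm_nonneg _) ?_
  calc |f (Φ y)| = 1 / 2 * |⟪y, A y⟫| := by rw [hquad y hy, abs_mul, abs_of_pos one_half_pos]
    _ ≤ 1 / 2 * (c * ‖A y‖ ^ 2) := by gcongr; exact hcA y
    _ ≤ 1 / 2 * (c * (‖gradient f (Φ y)‖ * M') ^ 2) := by gcongr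
    _ = c / 2 * M' ^ 2 * ‖gradient f (Φ y)‖ ^ 2 := by ring

/-- Morse–Bott implies Łojasiewicz exponent one half (finite-dimensional version): if
`f : U → ℝ` is `C³` near `0 ∈ ℝᵈ` with `f(0) = 0`, `f'(0) = 0`, and there is a `C¹` change of
coordinates `Φ` with `Φ(0) = 0` bringing `f` to the quadratic normal form
`f(Φ(y)) = ½⟨y, A y⟩` for a symmetric `A`, then there are a neighborhood `U'` of `0` and
`C > 0` with `‖∇f(x)‖ ≥ C |f(x)|^{1/2}` on `U'`. -/
theorem morse_bott_lojasiewicz_half_findim (d : ℕ)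
    (U : Set (EuclideanSpace ℝ (Fin d))) (hU : IsOpen U)
    (h0U : (0 : EuclideanSpace ℝ (Fin d)) ∈ U)
    (f : EuclideanSpace ℝ (Fin d) → ℝ)
    (hf : ContDiffOn ℝ 3 f U) (hf0 : f 0 = 0) (hdf0 : fderiv ℝ f 0 = 0)
    (A : EuclideanSpace ℝ (Fin d) →L[ℝ] EuclideanSpace ℝ (Fin d))
    (hAsym : ∀ z w : EuclideanSpace ℝ (Fin d), ⟪A z, w⟫ = ⟪z, A w⟫)
    (V : Set (EuclideanSpace ℝ (Fin d))) (hV : IsOpen V)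
    (h0V : (0 : EuclideanSpace ℝ (Fin d)) ∈ V)
    (Φ : EuclideanSpace ℝ (Fin d) → EuclideanSpace ℝ (Fin d))
    (hΦ : ContDiffOn ℝ 1 Φ V) (hΦ0 : Φ 0 = 0)
    (hΦinj : Set.InjOn Φ V) (hΦU : Φ '' V ⊆ U) (hΦopen : IsOpen (Φ '' V))
    (M : ℝ) (hM : ∀ y ∈ V, ‖fderiv ℝ Φ y‖ ≤ M)
    (hquad : ∀ y ∈ V, f (Φ y) = (1 / 2) * ⟪y, A y⟫) :
    ∃ U' ⊆ U, IsOpen U' ∧ (0 : EuclideanSpace ℝ (Fin d)) ∈ U' ∧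
      ∃ C : ℝ, 0 < C ∧ ∀ x ∈ U', C * |f x| ^ ((1 : ℝ) / 2) ≤ ‖gradient f x‖ :=
  morse_bott_lojasiewicz_half_findim_general d U hU f hf A hAsym V hV h0V Φ hΦ hΦ0 hΦU hΦopen M hM
    hquad
end

section
/- Gradient flow convergence rate with Łojasiewicz exponent one half: Let H be a Hilbert space, E a C¹ function on an open set U of a Banach space X continuously embedded in H, with gradient map E' : U → H, and suppose ‖E'(x)‖_H ≥ c |E(x) − E(x_∞)|^{1/2} for all x in a ball U_σ around a critical point x_∞, where c > 0. If u : [0,∞) → X is a smooth solution of u̇(t) = −E'(u(t)) whose orbit stays in U_σ, and a ≤ E ≤ γ on U, then there exists u_∞ ∈ H with ‖u(t) − u_∞‖_H ≤ (2/c)√(γ − a) · exp(−c² t/2) for all t ≥ 0. -/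
open Set Filter Topology

/-! With `g t = E (u t) - E xinf` one has `ġ = -‖u̇‖²` and, by the Łojasiewicz inequality,
`ġ ≤ -c² |g|`. Since `g` is bounded, Grönwall rules out negative values (they would grow like
`e^{c² t}`) and then gives `g t ≤ g 0 e^{-c² t}`. The length of the orbit is controlled by `√g`:
`d/dt √g = -‖u̇‖² / (2 √g) ≤ -(c/2) ‖u̇‖`, so `‖j (u t) - j (u s)‖ ≤ (2/c) √(g s)`, which decays
like `e^{-c² s/2}`; hence `j ∘ u` is Cauchy and its limit satisfies the bound. -/

theorem le_mul_exp_of_deriv_le_mul {g g' : ℝ → ℝ} {k s t : ℝ}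
    (hg : ∀ τ ∈ Ici s, HasDerivAt g (g' τ) τ) (hbound : ∀ τ ∈ Ici s, g' τ ≤ k * g τ)
    (hst : s ≤ t) : g t ≤ g s * Real.exp (k * (t - s)) := by
  have := le_gronwallBound_of_liminf_deriv_right_le (b := t)
    (fun τ hτ => (hg τ hτ.1).continuousAt.continuousWithinAt)
    (fun τ hτ _ hr => (hg τ hτ.1).hasDerivWithinAt.liminf_right_slope_le hr) le_rfl
    (fun τ hτ => (hbound τ hτ.1).trans_eq (add_zero _).symm) t ⟨hst, le_rfl⟩
  rwa [gronwallBound_ε0] at this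

theorem nonneg_of_deriv_le_neg_mul_abs {g g' : ℝ → ℝ} {k m s t : ℝ} (hk : 0 < k)
    (hg : ∀ τ ∈ Ici s, HasDerivAt g (g' τ) τ) (hbound : ∀ τ ∈ Ici s, g' τ ≤ -k * |g τ|)
    (hbdd : ∀ τ ∈ Ici s, m ≤ g τ) (hst : s ≤ t) : 0 ≤ g t := by
  by_contra! hneg
  have hgrowth : ∀ τ ≥ t, g τ ≤ g t * Real.exp (k * (τ - t)) := fun τ hτ =>
    le_mul_exp_of_deriv_le_mul (fun r hr => hg r (hst.trans hr))
      (fun r hr => (hbound r (hst.trans hr)).trans (by nlinarith [neg_abs_le (g r)])) hτ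
  have hdiverge : Tendsto (fun τ => g t * Real.exp (k * (τ - t))) atTop atBot :=
    (Real.tendsto_exp_atTop.comp
      ((tendsto_id.atTop_add tendsto_const_nhds).const_mul_atTop hk)).const_mul_atTop_of_neg hneg
  obtain ⟨τ, hτm, hτt⟩ := ((hdiverge.eventually_lt_atBot m).and (eventually_ge_atTop t)).exists
  linarith [hgrowth τ hτt, hbdd τ (hst.trans hτt)]

theorem sqrt_le_sqrt_mul_exp_of_deriv_le_neg_mul_abs {g g' : ℝ → ℝ} {k s t : ℝ} (hk : 0 ≤ k)
    (hg : ∀ τ ∈ Ici s, HasDerivAt g (g' τ) τ) (hbound : ∀ τ ∈ Ici s, g' τ ≤ -k * |g τ|)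
    (hst : s ≤ t) : √(g t) ≤ √(g s) * Real.exp (-k * (t - s) / 2) := by
  have hdecay : g t ≤ g s * Real.exp (-k * (t - s)) :=
    le_mul_exp_of_deriv_le_mul hg
      (fun τ hτ => (hbound τ hτ).trans (by nlinarith [le_abs_self (g τ)])) hst
  calc √(g t) ≤ √(g s * Real.exp (-k * (t - s))) := Real.sqrt_le_sqrt hdecay
    _ = √(g s) * Real.exp (-k * (t - s) / 2) := by
      rw [Real.sqrt_mul' _ (Real.exp_pos _).le, Real.exp_half]

theorem le_sq_div_add_of_mul_sqrt_le {x y c ε : ℝ} (hc : 0 < c) (hy : 0 ≤ y) (hε : 0 < ε)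
    (hx : c * √y ≤ x) : x ≤ x ^ 2 / (c * √(y + ε)) + c * √ε := by
  have hsub : √(y + ε) ≤ √y + √ε := by
    rw [Real.sqrt_le_iff]
    refine ⟨by positivity, ?_⟩
    nlinarith [Real.sq_sqrt hy, Real.sq_sqrt hε.le, Real.sqrt_nonneg y, Real.sqrt_nonneg ε]
  have hq : 0 < c * √(y + ε) := mul_pos hc (Real.sqrt_pos.2 (by linarith))
  rw [div_add' _ _ _ hq.ne', le_div_iff₀ hq]
  rcases le_total (c * √(y + ε)) x with h | h
  · nlinarith [mul_le_mul_of_nonneg_left h (hq.le.trans h),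
      mul_pos (mul_pos hc (Real.sqrt_pos.2 hε)) hq]
  · have hgap : c * √(y + ε) - x ≤ c * √ε := by nlinarith
    nlinarith [mul_le_mul h hgap (by linarith) hq.le]

section

variable {F : Type*} [NormedAddCommGroup F]

theorem norm_sub_le_sub_of_norm_deriv_le_neg_deriv [NormedSpace ℝ F] {f f' : ℝ → F}
    {φ φ' : ℝ → ℝ} {s t : ℝ} (hst : s ≤ t) (hf : ∀ τ ∈ Icc s t, HasDerivAt f (f' τ) τ)
    (hφ : ∀ τ ∈ Icc s t, HasDerivAt φ (φ' τ) τ) (hbound : ∀ τ ∈ Ico s t, ‖f' τ‖ ≤ -φ' τ) :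
    ‖f t - f s‖ ≤ φ s - φ t :=
  image_norm_le_of_norm_deriv_right_le_deriv_boundary' (f := fun τ => f τ - f s)
    (B := fun τ => φ s - φ τ)
    (fun τ hτ => ((hf τ hτ).continuousAt.sub continuousAt_const).continuousWithinAt)
    (fun τ hτ => ((hf τ (Ico_subset_Icc_self hτ)).sub_const _).hasDerivWithinAt) (by simp)
    (fun τ hτ => (continuousAt_const.sub (hφ τ hτ).continuousAt).continuousWithinAt)
    (fun τ hτ => ((hφ τ (Ico_subset_Icc_self hτ)).const_sub _).hasDerivWithinAt) hbound
    ⟨hst, le_rfl⟩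

theorem norm_sub_le_two_div_mul_sqrt_of_lojasiewicz [NormedSpace ℝ F] {f f' : ℝ → F}
    {g : ℝ → ℝ} {c s t : ℝ} (hc : 0 < c) (hst : s ≤ t) (hf : ∀ τ ∈ Icc s t, HasDerivAt f (f' τ) τ)
    (hg : ∀ τ ∈ Icc s t, HasDerivAt g (-‖f' τ‖ ^ 2) τ) (hg0 : ∀ τ ∈ Icc s t, 0 ≤ g τ)
    (hloj : ∀ τ ∈ Icc s t, c * √(g τ) ≤ ‖f' τ‖) :
    ‖f t - f s‖ ≤ 2 / c * √(g s) := by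
  -- `√g` need not be differentiable where `g` vanishes: use `√(g + ε)` and let `ε → 0`.
  have hε : ∀ ε > 0, ‖f t - f s‖ ≤ 2 / c * √(g s + ε) + c * √ε * (t - s) := by
    intro ε hε
    have hφ : ∀ τ ∈ Icc s t, HasDerivAt (fun τ => 2 / c * √(g τ + ε) - c * √ε * τ)
        (-(‖f' τ‖ ^ 2 / (c * √(g τ + ε)) + c * √ε)) τ := by
      intro τ hτ
      have hp : 0 < g τ + ε := by linarith [hg0 τ hτ]
      refine ((((hg τ hτ).add_const ε).sqrt hp.ne').const_mul (2 / c)).sub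
        ((hasDerivAt_id τ).const_mul (c * √ε)) |>.congr_deriv ?_
      field_simp
      ring
    have hφst := norm_sub_le_sub_of_norm_deriv_le_neg_deriv hst hf hφ fun τ hτ => by
      rw [neg_neg]
      exact le_sq_div_add_of_mul_sqrt_le hc (hg0 τ (Ico_subset_Icc_self hτ)) hε
        (hloj τ (Ico_subset_Icc_self hτ))
    have : 0 ≤ 2 / c * √(g t + ε) := by positivity
    linarith
  have hlim : Tendsto (fun ε => 2 / c * √(g s + ε) + c * √ε * (t - s)) (𝓝[>] 0)
      (𝓝 (2 / c * √(g s))) := by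
    have hcont : Continuous fun ε => 2 / c * √(g s + ε) + c * √ε * (t - s) := by fun_prop
    simpa using (hcont.tendsto 0).mono_left nhdsWithin_le_nhds
  exact ge_of_tendsto hlim (eventually_nhdsWithin_of_forall hε)

theorem exists_norm_sub_le_of_forall_norm_sub_le [CompleteSpace F] {f : ℝ → F} {φ : ℝ → ℝ}
    (hφ : Tendsto φ atTop (𝓝 0)) (hf : ∀ s t, 0 ≤ s → s ≤ t → ‖f t - f s‖ ≤ φ s) :
    ∃ L, ∀ s, 0 ≤ s → ‖f s - L‖ ≤ φ s := by
  have hcauchy : CauchySeq f := by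
    refine Metric.cauchySeq_iff'.2 fun ε hε => ?_
    obtain ⟨N, hN, hN0⟩ := ((hφ.eventually (gt_mem_nhds hε)).and (eventually_ge_atTop 0)).exists
    exact ⟨N, fun n hn => (dist_eq_norm (f n) (f N) ▸ hf N n hN0 hn).trans_lt hN⟩
  obtain ⟨L, hL⟩ := cauchySeq_tendsto_of_complete hcauchy
  refine ⟨L, fun s hs => ?_⟩
  rw [norm_sub_rev]
  exact le_of_tendsto (hL.sub_const (f s)).norm
    ((eventually_ge_atTop s).mono fun t hst => hf s t hs hst)

end

theorem gradient_flow_exponential_convergence_general {X H : Type*}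
    [NormedAddCommGroup X] [NormedSpace ℝ X]
    [NormedAddCommGroup H] [InnerProductSpace ℝ H] [CompleteSpace H]
    (j : X →L[ℝ] H)
    (U : Set X)
    (E : X → ℝ) (G : X → X)
    (hE : ∀ x ∈ U, HasFDerivAt E ((innerSL ℝ (j (G x))).comp j) x)
    (xinf : X) (hxinfU : xinf ∈ U)
    (σ c a γ : ℝ) (hc : 0 < c)
    (hUσ : {x : X | ‖x - xinf‖ < σ} ⊆ U)
    (hbound : ∀ x ∈ U, a ≤ E x ∧ E x ≤ γ)
    (hloj : ∀ x : X, ‖x - xinf‖ < σ → c * |E x - E xinf| ^ ((1 : ℝ) / 2) ≤ ‖j (G x)‖)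
    (u : ℝ → X)
    (hu : ∀ t : ℝ, 0 ≤ t → HasDerivAt u (-(G (u t))) t)
    (horbit : ∀ t : ℝ, 0 ≤ t → ‖u t - xinf‖ < σ) :
    ∃ uinf : H, ∀ t : ℝ, 0 ≤ t →
      ‖j (u t) - uinf‖ ≤ (2 / c) * Real.sqrt (γ - a) * Real.exp (-(c ^ 2) * t / 2) := by
  set g : ℝ → ℝ := fun t => E (u t) - E xinf
  set v : ℝ → H := fun t => -j (G (u t))
  have hmem : ∀ t ∈ Ici (0 : ℝ), u t ∈ U := fun t ht => hUσ (horbit t ht)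
  have hf : ∀ t ∈ Ici (0 : ℝ), HasDerivAt (fun t => j (u t)) (v t) t := fun t ht => by
    simpa [v, Function.comp_def] using j.hasFDerivAt.comp_hasDerivAt t (hu t ht)
  have hg : ∀ t ∈ Ici (0 : ℝ), HasDerivAt g (-‖v t‖ ^ 2) t := fun t ht =>
    ((hE _ (hmem t ht)).comp_hasDerivAt t (hu t ht)).sub_const (E xinf) |>.congr_deriv
      (by simp [v])
  have hloj' : ∀ t ∈ Ici (0 : ℝ), c * √|g t| ≤ ‖v t‖ := fun t ht => by
    simpa [v, Real.sqrt_eq_rpow] using hloj _ (horbit t ht)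
  have hdissip : ∀ t ∈ Ici (0 : ℝ), -‖v t‖ ^ 2 ≤ -c ^ 2 * |g t| := fun t ht => by
    have := pow_le_pow_left₀ (by positivity) (hloj' t ht) 2
    rw [mul_pow, Real.sq_sqrt (abs_nonneg _)] at this
    linarith
  have hg0 : ∀ t ∈ Ici (0 : ℝ), 0 ≤ g t := fun t ht =>
    nonneg_of_deriv_le_neg_mul_abs (m := a - γ) (pow_pos hc 2) hg hdissip
      (fun τ hτ => by linarith [hbound _ (hmem τ hτ), hbound _ hxinfU]) ht
  have hdecay : ∀ t ∈ Ici (0 : ℝ),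
      2 / c * √(g t) ≤ 2 / c * √(γ - a) * Real.exp (-(c ^ 2) * t / 2) := fun t ht => by
    have h := sqrt_le_sqrt_mul_exp_of_deriv_le_neg_mul_abs (sq_nonneg c) hg hdissip ht
    rw [sub_zero] at h
    rw [mul_assoc]
    gcongr
    refine h.trans ?_
    gcongr
    linarith [hbound _ (hmem 0 self_mem_Ici), hbound _ hxinfU]
  have hrate :
      Tendsto (fun t => 2 / c * √(γ - a) * Real.exp (-(c ^ 2) * t / 2)) atTop (𝓝 0) := by
    have : Tendsto (fun t : ℝ => -(c ^ 2) * t / 2) atTop atBot :=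
      (tendsto_id.const_mul_atTop_of_neg (by nlinarith)).atBot_div_const two_pos
    simpa using (Real.tendsto_exp_atBot.comp this).const_mul (2 / c * √(γ - a))
  exact exists_norm_sub_le_of_forall_norm_sub_le hrate fun s t hs hst =>
    (norm_sub_le_two_div_mul_sqrt_of_lojasiewicz hc hst (fun τ hτ => hf τ (hs.trans hτ.1))
      (fun τ hτ => hg τ (hs.trans hτ.1)) (fun τ hτ => hg0 τ (hs.trans hτ.1))
      (fun τ hτ => abs_of_nonneg (hg0 τ (hs.trans hτ.1)) ▸ hloj' τ (hs.trans hτ.1))).trans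
      (hdecay s hs)

/-- Gradient flow convergence rate with Łojasiewicz exponent one half: if `E` obeys the
Łojasiewicz gradient inequality `‖E'(x)‖_H ≥ c |E(x) − E(x_∞)|^{1/2}` on the `X`-ball `U_σ`
about a critical point `x_∞`, and `u` is a solution of the gradient flow `u̇ = −E'(u)` whose
orbit stays in `U_σ`, with `a ≤ E ≤ γ` on `U`, then there is `u_∞ ∈ H` with
`‖u(t) − u_∞‖_H ≤ (2/c)√(γ − a) exp(−c² t/2)` for all `t ≥ 0`. -/
theorem gradient_flow_exponential_convergence {X H : Type*}
    [NormedAddCommGroup X] [NormedSpace ℝ X] [CompleteSpace X]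
    [NormedAddCommGroup H] [InnerProductSpace ℝ H] [CompleteSpace H]
    (j : X →L[ℝ] H) (hj : Function.Injective j) (hdense : DenseRange j)
    (U : Set X) (hU : IsOpen U)
    (E : X → ℝ) (G : X → X)
    (hE : ∀ x ∈ U, HasFDerivAt E ((innerSL ℝ (j (G x))).comp j) x)
    (xinf : X) (hxinfU : xinf ∈ U) (hcrit : G xinf = 0)
    (σ c a γ : ℝ) (hσ : 0 < σ) (hσ1 : σ ≤ 1) (hc : 0 < c) (haγ : a < γ)
    (hUσ : {x : X | ‖x - xinf‖ < σ} ⊆ U)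
    (hbound : ∀ x ∈ U, a ≤ E x ∧ E x ≤ γ)
    (hloj : ∀ x : X, ‖x - xinf‖ < σ → c * |E x - E xinf| ^ ((1 : ℝ) / 2) ≤ ‖j (G x)‖)
    (u : ℝ → X)
    (hu : ∀ t : ℝ, 0 ≤ t → HasDerivAt u (-(G (u t))) t)
    (horbit : ∀ t : ℝ, 0 ≤ t → ‖u t - xinf‖ < σ) :
    ∃ uinf : H, ∀ t : ℝ, 0 ≤ t →
      ‖j (u t) - uinf‖ ≤ (2 / c) * Real.sqrt (γ - a) * Real.exp (-(c ^ 2) * t / 2) :=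
  gradient_flow_exponential_convergence_general j U E G hE xinf hxinfU σ c a γ hc hUσ hbound hloj u
    hu horbit
end

section
/- Gradient flow convergence rate with Łojasiewicz exponent θ ∈ (1/2, 1): Under the setup of the Łojasiewicz gradient inequality ‖E'(x)‖_H ≥ c |E(x) − E(x_∞)|^θ on U_σ with θ ∈ (1/2, 1), if u solves u̇ = −E'(u) with orbit in U_σ and a ≤ E ≤ γ on U, then there exists u_∞ ∈ H with ‖u(t) − u_∞‖_H ≤ (1/(c(1−θ))) (c²(2θ−1) t + (γ − a)^{1−2θ})^{−(1−θ)/(2θ−1)} for all t ≥ 0; in particular convergence occurs at a power-law rate t^{−(1−θ)/(2θ−1)}. -/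
/-! Along the flow the energy gap `h = E ∘ u - E x_∞` satisfies `h' = -‖u̇‖²`, and the
Łojasiewicz inequality reads `c ≤ h^{-θ} ‖u̇‖`. It gives `-(h^{1-θ})' = (1-θ) h^{-θ} ‖u̇‖²
≥ c (1-θ) ‖u̇‖`, so the length of the orbit after time `s` is at most `h(s)^{1-θ} / (c(1-θ))`,
and `(h^{1-2θ})' ≥ c²(2θ-1)`, which integrates to the power-law decay of `h(s)^{1-θ}`. Hence
`j ∘ u` is Cauchy, and its limit lies within the claimed distance. The gap never becomes negative:
below the critical level the speed is bounded away from zero, which would drive `E` below `a`. -/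

open Set Filter Topology

lemma antitoneOn_of_hasDerivAt_nonpos {D : Set ℝ} (hD : Convex ℝ D) {f f' : ℝ → ℝ}
    (hf : ∀ x ∈ D, HasDerivAt f (f' x) x) (hf'₀ : ∀ x ∈ D, f' x ≤ 0) : AntitoneOn f D :=
  antitoneOn_of_hasDerivWithinAt_nonpos hD (fun x hx ↦ (hf x hx).continuousAt.continuousWithinAt)
    (fun x hx ↦ (hf x (interior_subset hx)).hasDerivWithinAt)
    fun x hx ↦ hf'₀ x (interior_subset hx)

lemma exists_dist_le_of_dist_le_of_tendsto {α : Type*} [PseudoMetricSpace α] [CompleteSpace α]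
    {f : ℝ → α} {b : ℝ → ℝ} (hb : Tendsto b atTop (𝓝 0))
    (hf : ∀ s t, 0 ≤ s → s ≤ t → dist (f s) (f t) ≤ b s) :
    ∃ L, ∀ t, 0 ≤ t → dist (f t) L ≤ b t := by
  have hcauchy : CauchySeq f := by
    refine Metric.cauchySeq_iff'.2 fun ε hε ↦ ?_
    obtain ⟨N, hN0, hNε⟩ := ((eventually_ge_atTop 0).and (hb.eventually (gt_mem_nhds hε))).exists
    exact ⟨N, fun n hn ↦ ((dist_comm _ _).trans_le (hf N n hN0 hn)).trans_lt hNε⟩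
  obtain ⟨L, hL⟩ := cauchySeq_tendsto_of_complete hcauchy
  refine ⟨L, fun t ht ↦ le_of_tendsto (tendsto_const_nhds.dist hL) ?_⟩
  filter_upwards [eventually_ge_atTop t] with τ hτ using hf t τ ht hτ

lemma tendsto_rpow_neg_linear_atTop {A B p : ℝ} (hA : 0 < A) (hp : 0 < p) :
    Tendsto (fun t ↦ (A * t + B) ^ (-p)) atTop (𝓝 0) :=
  (tendsto_rpow_neg_atTop hp).comp
    (tendsto_atTop_add_const_right _ B (tendsto_id.const_mul_atTop hA))

section LojasiewiczTrajectory

variable {F : Type*} [NormedAddCommGroup F] {v v' : ℝ → F} {h : ℝ → ℝ} {c θ : ℝ}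

lemma energy_antitoneOn (hh : ∀ t, 0 ≤ t → HasDerivAt h (-‖v' t‖ ^ 2) t) :
    AntitoneOn h (Ici 0) :=
  antitoneOn_of_hasDerivAt_nonpos (convex_Ici 0) hh fun _ _ ↦ neg_nonpos.2 (sq_nonneg _)

lemma energy_nonneg (hh : ∀ t, 0 ≤ t → HasDerivAt h (-‖v' t‖ ^ 2) t)
    (hloj : ∀ t, 0 ≤ t → c * |h t| ^ θ ≤ ‖v' t‖) (hc : 0 < c) (hθ : 0 ≤ θ) {m : ℝ}
    (hm : ∀ t, 0 ≤ t → m ≤ h t) {t : ℝ} (ht : 0 ≤ t) : 0 ≤ h t := by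
  by_contra! hneg
  set δ := c * (-h t) ^ θ
  have hδ : 0 < δ := mul_pos hc (Real.rpow_pos_of_pos (neg_pos.2 hneg) θ)
  have hdrop : AntitoneOn (fun τ ↦ h τ + δ ^ 2 * τ) (Ici t) := by
    refine antitoneOn_of_hasDerivAt_nonpos (convex_Ici t)
      (fun τ hτ ↦ (hh τ (ht.trans hτ)).add ((hasDerivAt_id τ).const_mul _)) fun τ hτ ↦ ?_
    have hτt : h τ ≤ h t := energy_antitoneOn hh ht (ht.trans hτ) hτ
    have hspeed : δ ≤ ‖v' τ‖ := by
      refine le_trans ?_ (hloj τ (ht.trans hτ))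
      show c * _ ≤ _
      gcongr
      · linarith
      · rw [abs_of_neg (hτt.trans_lt hneg)]
        linarith
    nlinarith
  set T := t + (h t - m + 1) / δ ^ 2
  have hT : t ≤ T := le_add_of_nonneg_right (div_nonneg (by linarith [hm t ht]) (by positivity))
  have hdropT := hdrop self_mem_Ici hT hT
  have hδT : δ ^ 2 * T = δ ^ 2 * t + (h t - m + 1) := by
    simp only [T]; field_simp
  linarith [hm T (ht.trans hT)]

lemma energy_eqOn_zero (hh : ∀ t, 0 ≤ t → HasDerivAt h (-‖v' t‖ ^ 2) t)
    (hnonneg : ∀ t, 0 ≤ t → 0 ≤ h t) {t : ℝ} (ht : 0 ≤ t) (h0 : h t = 0) : EqOn h 0 (Ici t) :=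
  fun τ hτ ↦ le_antisymm ((energy_antitoneOn hh ht (ht.trans hτ) hτ).trans_eq h0)
    (hnonneg τ (ht.trans hτ))

lemma speed_eq_zero_of_energy_eq_zero (hh : ∀ t, 0 ≤ t → HasDerivAt h (-‖v' t‖ ^ 2) t)
    (hnonneg : ∀ t, 0 ≤ t → 0 ≤ h t) {t : ℝ} (ht : 0 ≤ t) (h0 : h t = 0) : v' t = 0 := by
  have hzero := energy_eqOn_zero hh hnonneg ht h0
  have hderiv := (uniqueDiffWithinAt_Ici t).eq_deriv _ (hh t ht).hasDerivWithinAt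
    ((hasDerivWithinAt_const t _ 0).congr hzero (hzero self_mem_Ici))
  simpa using hderiv

lemma le_rpow_neg_mul_speed (hloj : ∀ t, 0 ≤ t → c * |h t| ^ θ ≤ ‖v' t‖) {t : ℝ} (ht : 0 ≤ t)
    (hpos : 0 < h t) : c ≤ h t ^ (-θ) * ‖v' t‖ := by
  rw [Real.rpow_neg hpos.le, inv_mul_eq_div, le_div_iff₀ (Real.rpow_pos_of_pos hpos θ)]
  simpa [abs_of_pos hpos] using hloj t ht

/-- A right derivative: at the first zero of `h`, `h ^ (1 - θ)` need not be differentiable from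
the left. -/
lemma hasDerivWithinAt_energy_rpow (hh : ∀ t, 0 ≤ t → HasDerivAt h (-‖v' t‖ ^ 2) t)
    (hnonneg : ∀ t, 0 ≤ t → 0 ≤ h t) {t : ℝ} (ht : 0 ≤ t) :
    HasDerivWithinAt (fun τ ↦ h τ ^ (1 - θ)) (-((1 - θ) * h t ^ (-θ) * ‖v' t‖ ^ 2)) (Ici t) t := by
  rcases (hnonneg t ht).eq_or_lt with h0 | hpos
  · have hzero := energy_eqOn_zero hh hnonneg ht h0.symm
    rw [speed_eq_zero_of_energy_eq_zero hh hnonneg ht h0.symm, norm_zero]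
    refine ((hasDerivWithinAt_const t _ (h t ^ (1 - θ))).congr (fun τ hτ ↦ ?_) rfl).congr_deriv
      (by ring)
    rw [hzero hτ, hzero self_mem_Ici]
    rfl
  · refine ((hh t ht).rpow_const (p := 1 - θ) (Or.inl hpos.ne')).hasDerivWithinAt.congr_deriv ?_
    rw [sub_sub_cancel_left]
    ring

lemma norm_sub_le_of_lojasiewicz [NormedSpace ℝ F] (hv : ∀ t, 0 ≤ t → HasDerivAt v (v' t) t)
    (hh : ∀ t, 0 ≤ t → HasDerivAt h (-‖v' t‖ ^ 2) t)
    (hloj : ∀ t, 0 ≤ t → c * |h t| ^ θ ≤ ‖v' t‖) (hnonneg : ∀ t, 0 ≤ t → 0 ≤ h t)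
    (hc : 0 < c) (hθ : θ < 1) {s t : ℝ} (hs : 0 ≤ s) (hst : s ≤ t) :
    ‖v t - v s‖ ≤ 1 / (c * (1 - θ)) * (h s ^ (1 - θ) - h t ^ (1 - θ)) := by
  have hspeed : ∀ τ, 0 ≤ τ →
      ‖v' τ‖ ≤ 1 / (c * (1 - θ)) * -(-((1 - θ) * h τ ^ (-θ) * ‖v' τ‖ ^ 2)) := by
    intro τ hτ
    rcases (hnonneg τ hτ).eq_or_lt with h0 | hpos
    · simp [speed_eq_zero_of_energy_eq_zero hh hnonneg hτ h0.symm]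
    have h1θ : 1 - θ ≠ 0 := by linarith
    calc ‖v' τ‖ = 1 / c * (c * ‖v' τ‖) := by field_simp
      _ ≤ 1 / c * ((h τ ^ (-θ) * ‖v' τ‖) * ‖v' τ‖) := by
          gcongr; exact le_rpow_neg_mul_speed hloj hτ hpos
      _ = _ := by field_simp
  refine image_norm_le_of_norm_deriv_right_le_deriv_boundary' (f := fun τ ↦ v τ - v s)
    (B := fun τ ↦ 1 / (c * (1 - θ)) * (h s ^ (1 - θ) - h τ ^ (1 - θ)))
    (fun τ hτ ↦ ((hv τ (hs.trans hτ.1)).continuousAt.sub continuousAt_const).continuousWithinAt)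
    (fun τ hτ ↦ ((hv τ (hs.trans hτ.1)).sub_const (v s)).hasDerivWithinAt) (by simp)
    (fun τ hτ ↦ ?_)
    (fun τ hτ ↦ ((hasDerivWithinAt_energy_rpow hh hnonneg (hs.trans hτ.1)).const_sub _).const_mul _)
    (fun τ hτ ↦ hspeed τ (hs.trans hτ.1)) ⟨hst, le_rfl⟩
  exact (continuousAt_const.mul (continuousAt_const.sub
    ((hh τ (hs.trans hτ.1)).continuousAt.rpow_const (Or.inr (by linarith))))).continuousWithinAt

lemma add_mul_le_energy_rpow (hh : ∀ t, 0 ≤ t → HasDerivAt h (-‖v' t‖ ^ 2) t)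
    (hloj : ∀ t, 0 ≤ t → c * |h t| ^ θ ≤ ‖v' t‖) (hc : 0 ≤ c) (hθ : 1 / 2 < θ) {t : ℝ}
    (ht : 0 ≤ t) (hpos : 0 < h t) :
    h 0 ^ (1 - 2 * θ) + c ^ 2 * (2 * θ - 1) * t ≤ h t ^ (1 - 2 * θ) := by
  have hposIcc : ∀ τ ∈ Icc 0 t, 0 < h τ :=
    fun τ hτ ↦ hpos.trans_le (energy_antitoneOn hh hτ.1 ht hτ.2)
  have hanti : AntitoneOn (fun τ ↦ c ^ 2 * (2 * θ - 1) * τ - h τ ^ (1 - 2 * θ)) (Icc 0 t) := by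
    refine antitoneOn_of_hasDerivAt_nonpos (convex_Icc 0 t) (fun τ hτ ↦
      ((hasDerivAt_id τ).const_mul _).sub
        ((hh τ hτ.1).rpow_const (Or.inl (hposIcc τ hτ).ne'))) fun τ hτ ↦ ?_
    have hsq : c ^ 2 ≤ (h τ ^ (-θ) * ‖v' τ‖) ^ 2 :=
      pow_le_pow_left₀ hc (le_rpow_neg_mul_speed hloj hτ.1 (hposIcc τ hτ)) 2
    have hexp : h τ ^ (1 - 2 * θ - 1) = h τ ^ (-θ) * h τ ^ (-θ) := by
      rw [← Real.rpow_add (hposIcc τ hτ)]; ring_nf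
    rw [hexp]
    nlinarith
  have h0t := hanti ⟨le_rfl, ht⟩ ⟨ht, le_rfl⟩ ht
  simp only [mul_zero, zero_sub] at h0t
  linarith

lemma energy_rpow_le (hh : ∀ t, 0 ≤ t → HasDerivAt h (-‖v' t‖ ^ 2) t)
    (hloj : ∀ t, 0 ≤ t → c * |h t| ^ θ ≤ ‖v' t‖) (hnonneg : ∀ t, 0 ≤ t → 0 ≤ h t)
    (hc : 0 ≤ c) (hθ : 1 / 2 < θ) (hθ1 : θ < 1) {M : ℝ} (hM : 0 < M) (h0 : h 0 ≤ M) {t : ℝ}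
    (ht : 0 ≤ t) :
    h t ^ (1 - θ) ≤ (c ^ 2 * (2 * θ - 1) * t + M ^ (1 - 2 * θ)) ^ (-(1 - θ) / (2 * θ - 1)) := by
  have hbase : 0 < c ^ 2 * (2 * θ - 1) * t + M ^ (1 - 2 * θ) := by
    have : 0 ≤ c ^ 2 * (2 * θ - 1) * t := mul_nonneg (mul_nonneg (sq_nonneg c) (by linarith)) ht
    linarith [Real.rpow_pos_of_pos hM (1 - 2 * θ)]
  rcases (hnonneg t ht).eq_or_lt with hzero | hpos
  · rw [← hzero, Real.zero_rpow (by linarith)]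
    exact (Real.rpow_pos_of_pos hbase _).le
  have hexp : h t ^ (1 - θ) = (h t ^ (1 - 2 * θ)) ^ (-(1 - θ) / (2 * θ - 1)) := by
    have h2θ : 2 * θ - 1 ≠ 0 := by linarith
    rw [← Real.rpow_mul hpos.le]
    congr 1
    rw [mul_div_assoc', eq_div_iff h2θ]
    ring
  rw [hexp]
  refine Real.rpow_le_rpow_of_nonpos hbase ?_
    (div_nonpos_of_nonpos_of_nonneg (by linarith) (by linarith))
  have hM0 : M ^ (1 - 2 * θ) ≤ h 0 ^ (1 - 2 * θ) :=
    Real.rpow_le_rpow_of_nonpos (hpos.trans_le (energy_antitoneOn hh self_mem_Ici ht ht)) h0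
      (by linarith)
  linarith [add_mul_le_energy_rpow hh hloj hc hθ ht hpos]

lemma exists_norm_sub_le_of_lojasiewicz [NormedSpace ℝ F] [CompleteSpace F]
    (hv : ∀ t, 0 ≤ t → HasDerivAt v (v' t) t) (hh : ∀ t, 0 ≤ t → HasDerivAt h (-‖v' t‖ ^ 2) t)
    (hloj : ∀ t, 0 ≤ t → c * |h t| ^ θ ≤ ‖v' t‖) (hnonneg : ∀ t, 0 ≤ t → 0 ≤ h t)
    (hc : 0 < c) (hθ : 1 / 2 < θ) (hθ1 : θ < 1) {M : ℝ} (hM : 0 < M) (h0 : h 0 ≤ M) :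
    ∃ L, ∀ t, 0 ≤ t → ‖v t - L‖ ≤ 1 / (c * (1 - θ)) *
      (c ^ 2 * (2 * θ - 1) * t + M ^ (1 - 2 * θ)) ^ (-(1 - θ) / (2 * θ - 1)) := by
  have hK : 0 ≤ 1 / (c * (1 - θ)) := by
    have : 0 < 1 - θ := by linarith
    positivity
  have hrate : Tendsto (fun t ↦ 1 / (c * (1 - θ)) *
      (c ^ 2 * (2 * θ - 1) * t + M ^ (1 - 2 * θ)) ^ (-(1 - θ) / (2 * θ - 1))) atTop (𝓝 0) := by
    rw [neg_div]
    simpa using (tendsto_rpow_neg_linear_atTop (B := M ^ (1 - 2 * θ))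
      (mul_pos (pow_pos hc 2) (by linarith : 0 < 2 * θ - 1))
      (div_pos (by linarith : 0 < 1 - θ) (by linarith : 0 < 2 * θ - 1))).const_mul
        (1 / (c * (1 - θ)))
  simp only [← dist_eq_norm]
  refine exists_dist_le_of_dist_le_of_tendsto hrate fun s t hs hst ↦ ?_
  calc dist (v s) (v t) = ‖v t - v s‖ := dist_comm _ _ |>.trans (dist_eq_norm _ _)
    _ ≤ 1 / (c * (1 - θ)) * (h s ^ (1 - θ) - h t ^ (1 - θ)) :=
        norm_sub_le_of_lojasiewicz hv hh hloj hnonneg hc hθ1 hs hst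
    _ ≤ _ := by
        gcongr
        linarith [energy_rpow_le hh hloj hnonneg hc.le hθ hθ1 hM h0 hs,
          Real.rpow_nonneg (hnonneg t (hs.trans hst)) (1 - θ)]

end LojasiewiczTrajectory

theorem gradient_flow_powerlaw_convergence_general {X H : Type*}
    [NormedAddCommGroup X] [NormedSpace ℝ X]
    [NormedAddCommGroup H] [InnerProductSpace ℝ H] [CompleteSpace H]
    (j : X →L[ℝ] H)
    (U : Set X)
    (E : X → ℝ) (G : X → X)
    (hE : ∀ x ∈ U, HasFDerivAt E ((innerSL ℝ (j (G x))).comp j) x)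
    (xinf : X) (hxinfU : xinf ∈ U)
    (σ c a γ θ : ℝ) (hc : 0 < c) (haγ : a < γ)
    (hθ : 1 / 2 < θ) (hθ' : θ < 1)
    (hUσ : {x : X | ‖x - xinf‖ < σ} ⊆ U)
    (hbound : ∀ x ∈ U, a ≤ E x ∧ E x ≤ γ)
    (hloj : ∀ x : X, ‖x - xinf‖ < σ → c * |E x - E xinf| ^ θ ≤ ‖j (G x)‖)
    (u : ℝ → X)
    (hu : ∀ t : ℝ, 0 ≤ t → HasDerivAt u (-(G (u t))) t)
    (horbit : ∀ t : ℝ, 0 ≤ t → ‖u t - xinf‖ < σ) :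
    ∃ uinf : H, ∀ t : ℝ, 0 ≤ t →
      ‖j (u t) - uinf‖ ≤ (1 / (c * (1 - θ)))
        * (c ^ 2 * (2 * θ - 1) * t + (γ - a) ^ (1 - 2 * θ)) ^ (-(1 - θ) / (2 * θ - 1)) := by
  have hbound' : ∀ t, 0 ≤ t → a ≤ E (u t) ∧ E (u t) ≤ γ := fun t ht ↦ hbound _ (hUσ (horbit t ht))
  have hflow : ∀ t, 0 ≤ t → HasDerivAt (fun t ↦ j (u t)) (-j (G (u t))) t := fun t ht ↦
    (j.hasFDerivAt.comp_hasDerivAt t (hu t ht)).congr_deriv (map_neg j _)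
  have henergy : ∀ t, 0 ≤ t →
      HasDerivAt (fun t ↦ E (u t) - E xinf) (-‖-j (G (u t))‖ ^ 2) t := fun t ht ↦ by
    simpa [real_inner_self_eq_norm_sq] using
      ((hE _ (hUσ (horbit t ht))).comp_hasDerivAt t (hu t ht)).sub_const (E xinf)
  have hloj' : ∀ t, 0 ≤ t → c * |E (u t) - E xinf| ^ θ ≤ ‖-j (G (u t))‖ := fun t ht ↦ by
    simpa using hloj _ (horbit t ht)
  have hnonneg : ∀ t, 0 ≤ t → 0 ≤ E (u t) - E xinf := fun t ↦
    energy_nonneg henergy hloj' hc (by linarith) (m := a - E xinf)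
      fun t ht ↦ by linarith [hbound' t ht]
  exact exists_norm_sub_le_of_lojasiewicz hflow henergy hloj' hnonneg hc hθ hθ'
    (sub_pos.2 haγ) (by linarith [hbound' 0 le_rfl, hbound xinf hxinfU])

/-- Gradient flow convergence rate with Łojasiewicz exponent `θ ∈ (1/2, 1)`: if `E` obeys
`‖E'(x)‖_H ≥ c |E(x) − E(x_∞)|^θ` on the `X`-ball `U_σ` about a critical point `x_∞`, and `u`
solves `u̇ = −E'(u)` with orbit in `U_σ`, with `a ≤ E ≤ γ` on `U`, then there is `u_∞ ∈ H`
with `‖u(t) − u_∞‖_H ≤ (1/(c(1−θ))) (c²(2θ−1) t + (γ−a)^{1−2θ})^{−(1−θ)/(2θ−1)}` for all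
`t ≥ 0`. -/
theorem gradient_flow_powerlaw_convergence {X H : Type*}
    [NormedAddCommGroup X] [NormedSpace ℝ X] [CompleteSpace X]
    [NormedAddCommGroup H] [InnerProductSpace ℝ H] [CompleteSpace H]
    (j : X →L[ℝ] H) (hj : Function.Injective j)
    (U : Set X) (hU : IsOpen U)
    (E : X → ℝ) (G : X → X)
    (hE : ∀ x ∈ U, HasFDerivAt E ((innerSL ℝ (j (G x))).comp j) x)
    (xinf : X) (hxinfU : xinf ∈ U) (hcrit : G xinf = 0)
    (σ c a γ θ : ℝ) (hσ : 0 < σ) (hσ1 : σ ≤ 1) (hc : 0 < c) (haγ : a < γ)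
    (hθ : 1 / 2 < θ) (hθ' : θ < 1)
    (hUσ : {x : X | ‖x - xinf‖ < σ} ⊆ U)
    (hbound : ∀ x ∈ U, a ≤ E x ∧ E x ≤ γ)
    (hloj : ∀ x : X, ‖x - xinf‖ < σ → c * |E x - E xinf| ^ θ ≤ ‖j (G x)‖)
    (u : ℝ → X)
    (hu : ∀ t : ℝ, 0 ≤ t → HasDerivAt u (-(G (u t))) t)
    (horbit : ∀ t : ℝ, 0 ≤ t → ‖u t - xinf‖ < σ) :
    ∃ uinf : H, ∀ t : ℝ, 0 ≤ t →
      ‖j (u t) - uinf‖ ≤ (1 / (c * (1 - θ)))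
        * (c ^ 2 * (2 * θ - 1) * t + (γ - a) ^ (1 - 2 * θ)) ^ (-(1 - θ) / (2 * θ - 1)) :=
  gradient_flow_powerlaw_convergence_general j U E G hE xinf hxinfU σ c a γ θ hc haγ hθ hθ' hUσ
    hbound hloj u hu horbit
end
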